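/- arXiv:2001.11952 — 5 statements merged into one kernel-verified Lean document; each statement's English description precedes it below -/
import Mathlib

section
/- Assume a ≤ 0, k > 0, a + bk > 0 (hence b > 0), and let λ₁ > 0. Then the function τ ↦ d*(τ) is strictly decreasing on (0, ∞): for all 0 < τ₁ < τ₂ one has d*(τ₁) > d*(τ₂). -/
/-! Rationalizing the numerator, `aτ - 1 + √((aτ-1)² + 4τ(a+bk))` equals
`4τ(a+bk) / (√((aτ-1)² + 4τ(a+bk)) - (aτ-1))`, so `d*(τ) = 2(a+bk) / (λ₁ g(τ))` with
`g(τ) = √((aτ-1)² + 4τ(a+bk)) - (aτ-1)`. For `a ≤ 0` both the radicand and `-(aτ-1)` grow with `τ`,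
so `g` is positive and strictly increasing and `d*` is strictly decreasing. -/

open Real

lemma lt_sqrt_sq_add {u t : ℝ} (ht : 0 < t) : u < √(u ^ 2 + t) :=
  calc u ≤ |u| := le_abs_self u
    _ = √(u ^ 2) := (sqrt_sq_eq_abs u).symm
    _ < √(u ^ 2 + t) := sqrt_lt_sqrt (sq_nonneg u) (lt_add_of_pos_right _ ht)

lemma add_sqrt_sq_add_eq_div {u t : ℝ} (ht : 0 < t) :
    u + √(u ^ 2 + t) = t / (√(u ^ 2 + t) - u) := by
  rw [eq_div_iff (sub_pos.2 (lt_sqrt_sq_add ht)).ne']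
  linear_combination sq_sqrt (add_nonneg (sq_nonneg u) ht.le)

lemma strictMonoOn_sqrt_sub {a c : ℝ} (ha : a ≤ 0) (hc : 0 < c) :
    StrictMonoOn (fun τ => √((a * τ - 1) ^ 2 + 4 * τ * c) - (a * τ - 1)) (Set.Ici 0) := by
  intro x hx y hy hxy
  have hrad : (a * x - 1) ^ 2 + 4 * x * c < (a * y - 1) ^ 2 + 4 * y * c := by
    have hpos : 0 < (y - x) * (a ^ 2 * (x + y) + 2 * (2 * c - a)) := by
      have : 0 ≤ a ^ 2 * (x + y) := mul_nonneg (sq_nonneg a) (add_nonneg hx hy)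
      exact mul_pos (sub_pos.2 hxy) (by linarith)
    linear_combination hpos
  have hsqrt := sqrt_lt_sqrt
    (add_nonneg (sq_nonneg _) (mul_nonneg (mul_nonneg zero_le_four hx) hc.le)) hrad
  have hlin : a * y ≤ a * x := mul_le_mul_of_nonpos_left hxy.le ha
  dsimp only
  linarith

theorem stmt3_general (a b k lam1 : ℝ) (ha : a ≤ 0) (habk : 0 < a + b * k)
    (hlam : 0 < lam1)
    (dstar : ℝ → ℝ)
    (hd : ∀ τ > (0:ℝ), dstar τ =
      (1 / (2 * lam1 * τ)) * (a * τ - 1 + Real.sqrt ((a * τ + 1) ^ 2 + 4 * b * k * τ))) :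
    ∀ τ₁ τ₂ : ℝ, 0 < τ₁ → τ₁ < τ₂ → dstar τ₁ > dstar τ₂ := by
  set g : ℝ → ℝ := fun τ => √((a * τ - 1) ^ 2 + 4 * τ * (a + b * k)) - (a * τ - 1)
  have hg_pos : ∀ τ > 0, 0 < g τ := fun τ hτ => sub_pos.2 (lt_sqrt_sq_add (by positivity))
  have hdg : ∀ τ > 0, dstar τ = 2 * (a + b * k) / lam1 / g τ := by
    intro τ hτ
    have hrad : (a * τ + 1) ^ 2 + 4 * b * k * τ = (a * τ - 1) ^ 2 + 4 * τ * (a + b * k) := by ring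
    have hgτ : g τ = √((a * τ - 1) ^ 2 + 4 * τ * (a + b * k)) - (a * τ - 1) := rfl
    rw [hd τ hτ, hrad, add_sqrt_sq_add_eq_div (by positivity), ← hgτ]
    have hgτ_ne := (hg_pos τ hτ).ne'
    field_simp
    norm_num
  intro τ₁ τ₂ h₁ h₁₂
  have h₂ : 0 < τ₂ := h₁.trans h₁₂
  rw [hdg τ₁ h₁, hdg τ₂ h₂]
  exact div_lt_div_of_pos_left (by positivity) (hg_pos τ₁ h₁)
    (strictMonoOn_sqrt_sub ha habk h₁.le h₂.le h₁₂)

/-- If a ≤ 0, k > 0, a + bk > 0 and λ₁ > 0, then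
τ ↦ d*(τ) = (1/(2λ₁τ))(aτ − 1 + √((aτ+1)² + 4bkτ)) is strictly decreasing on (0, ∞). -/
theorem stmt3 (a b k lam1 : ℝ) (ha : a ≤ 0) (hk : 0 < k) (habk : 0 < a + b * k)
    (hlam : 0 < lam1)
    (dstar : ℝ → ℝ)
    (hd : ∀ τ > (0:ℝ), dstar τ =
      (1 / (2 * lam1 * τ)) * (a * τ - 1 + Real.sqrt ((a * τ + 1) ^ 2 + 4 * b * k * τ))) :
    ∀ τ₁ τ₂ : ℝ, 0 < τ₁ → τ₁ < τ₂ → dstar τ₁ > dstar τ₂ :=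
  stmt3_general a b k lam1 ha habk hlam dstar hd
end

section
/- Assume k > 0, a + bk > 0, a > 0, and let λ₁ > 0. If b > 0 then τ ↦ d*(τ) is strictly decreasing on (0, ∞), and if b < 0 then τ ↦ d*(τ) is strictly increasing on (0, ∞). -/
/-!
Write `c = b k` and `s = 1/τ`. Then `2 λ₁ d*(τ) = a + F(s)` with `F(s) = √R(s) - s`, where
`R(s) = (a + s)² + 4 c s = X(s)² - 4 c (a + c)` and `X(s) = a + s + 2c`. Since `R` is a quadratic
with leading term `s²`, `R(s₂) - R(s₁) = (s₂ - s₁)(X(s₁) + X(s₂))`, so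
`F(s₂) - F(s₁) = (s₂ - s₁)((X(s₁) + X(s₂)) - (√R(s₁) + √R(s₂))) / (√R(s₁) + √R(s₂))`.
As `a + c > 0`, the sign of `c` decides whether `√R < X` or `X < √R`, hence whether `F` is
increasing or decreasing; composing with the decreasing map `τ ↦ 1/τ` reverses this.
-/

open Set

namespace DStar

lemma radicand_pos {a c s : ℝ} (hac : 0 < a + c) (hs : 0 < s) :
    0 < (a + s) ^ 2 + 4 * c * s := by
  nlinarith [sq_nonneg (a - s), mul_pos hs hac]

lemma sq_sqrt_radicand_sub_sq_sqrt_radicand {a c s₁ s₂ : ℝ} (hac : 0 < a + c)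
    (hs₁ : 0 < s₁) (hs₂ : 0 < s₂) :
    √((a + s₂) ^ 2 + 4 * c * s₂) ^ 2 - √((a + s₁) ^ 2 + 4 * c * s₁) ^ 2 =
      (s₂ - s₁) * ((a + s₁ + 2 * c) + (a + s₂ + 2 * c)) := by
  rw [Real.sq_sqrt (radicand_pos hac hs₁).le, Real.sq_sqrt (radicand_pos hac hs₂).le]
  ring

lemma sqrt_radicand_lt {a c s : ℝ} (hc : 0 < c) (hac : 0 < a + c) (hs : 0 ≤ s) :
    √((a + s) ^ 2 + 4 * c * s) < a + s + 2 * c := by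
  rw [Real.sqrt_lt' (by linarith)]
  nlinarith [mul_pos hc hac]

lemma lt_sqrt_radicand {a c : ℝ} (hc : c < 0) (hac : 0 < a + c) (s : ℝ) :
    a + s + 2 * c < √((a + s) ^ 2 + 4 * c * s) :=
  Real.lt_sqrt_of_sq_lt (by nlinarith [mul_neg_of_neg_of_pos hc hac])

lemma lt_sub_of_sq_sub_sq_eq {u v x y d : ℝ} (huv : 0 < u + v) (hd : 0 < d)
    (h : v ^ 2 - u ^ 2 = d * (x + y)) (hux : u < x) (hvy : v < y) : d < v - u := by
  refine lt_of_mul_lt_mul_right ?_ huv.le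
  calc d * (u + v) < d * (x + y) := mul_lt_mul_of_pos_left (by linarith) hd
    _ = (v - u) * (u + v) := by linear_combination -h

lemma sub_lt_of_sq_sub_sq_eq {u v x y d : ℝ} (huv : 0 < u + v) (hd : 0 < d)
    (h : v ^ 2 - u ^ 2 = d * (x + y)) (hxu : x < u) (hyv : y < v) : v - u < d := by
  refine lt_of_mul_lt_mul_right ?_ huv.le
  calc (v - u) * (u + v) = d * (x + y) := by linear_combination h
    _ < d * (u + v) := mul_lt_mul_of_pos_left (by linarith) hd

lemma sqrt_radicand_add_pos {a c s₁ s₂ : ℝ} (hac : 0 < a + c) (hs₂ : 0 < s₂) :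
    0 < √((a + s₁) ^ 2 + 4 * c * s₁) + √((a + s₂) ^ 2 + 4 * c * s₂) :=
  add_pos_of_nonneg_of_pos (Real.sqrt_nonneg _) (Real.sqrt_pos.2 (radicand_pos hac hs₂))

lemma strictMonoOn_sqrt_radicand_sub {a c : ℝ} (hc : 0 < c) (hac : 0 < a + c) :
    StrictMonoOn (fun s => √((a + s) ^ 2 + 4 * c * s) - s) (Ioi 0) := by
  intro s₁ (hs₁ : 0 < s₁) s₂ (hs₂ : 0 < s₂) hlt
  have := lt_sub_of_sq_sub_sq_eq (sqrt_radicand_add_pos hac hs₂) (sub_pos.2 hlt)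
    (sq_sqrt_radicand_sub_sq_sqrt_radicand hac hs₁ hs₂)
    (sqrt_radicand_lt hc hac hs₁.le) (sqrt_radicand_lt hc hac hs₂.le)
  dsimp only
  linarith

lemma strictAntiOn_sqrt_radicand_sub {a c : ℝ} (hc : c < 0) (hac : 0 < a + c) :
    StrictAntiOn (fun s => √((a + s) ^ 2 + 4 * c * s) - s) (Ioi 0) := by
  intro s₁ (hs₁ : 0 < s₁) s₂ (hs₂ : 0 < s₂) hlt
  have := sub_lt_of_sq_sub_sq_eq (sqrt_radicand_add_pos hac hs₂) (sub_pos.2 hlt)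
    (sq_sqrt_radicand_sub_sq_sqrt_radicand hac hs₁ hs₂)
    (lt_sqrt_radicand hc hac s₁) (lt_sqrt_radicand hc hac s₂)
  dsimp only
  linarith

lemma formula_eq_inv_subst {a c lam τ : ℝ} (hτ : 0 < τ) :
    1 / (2 * lam * τ) * (a * τ - 1 + √((a * τ + 1) ^ 2 + 4 * c * τ)) =
      (a + (√((a + τ⁻¹) ^ 2 + 4 * c * τ⁻¹) - τ⁻¹)) / (2 * lam) := by
  have hsqrt : √((a * τ + 1) ^ 2 + 4 * c * τ) = τ * √((a + τ⁻¹) ^ 2 + 4 * c * τ⁻¹) := by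
    rw [show (a * τ + 1) ^ 2 + 4 * c * τ = τ ^ 2 * ((a + τ⁻¹) ^ 2 + 4 * c * τ⁻¹) by
      field_simp, Real.sqrt_mul (sq_nonneg τ), Real.sqrt_sq hτ.le]
  rw [hsqrt]
  field_simp
  ring

end DStar

open DStar in
theorem stmt4_general (a b k lam1 : ℝ) (hk : 0 < k) (habk : 0 < a + b * k)
    (hlam : 0 < lam1)
    (dstar : ℝ → ℝ)
    (hd : ∀ τ > (0:ℝ), dstar τ =
      (1 / (2 * lam1 * τ)) * (a * τ - 1 + Real.sqrt ((a * τ + 1) ^ 2 + 4 * b * k * τ))) :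
    (0 < b → ∀ τ₁ τ₂ : ℝ, 0 < τ₁ → τ₁ < τ₂ → dstar τ₁ > dstar τ₂) ∧
    (b < 0 → ∀ τ₁ τ₂ : ℝ, 0 < τ₁ → τ₁ < τ₂ → dstar τ₁ < dstar τ₂) := by
  set F := fun s => √((a + s) ^ 2 + 4 * (b * k) * s) - s
  have hdF : ∀ τ > (0:ℝ), dstar τ = (a + F τ⁻¹) / (2 * lam1) := fun τ hτ => by
    rw [hd τ hτ, ← formula_eq_inv_subst hτ, mul_assoc 4 b k]
  have hinv : MapsTo (fun τ : ℝ => τ⁻¹) (Ioi 0) (Ioi 0) := fun τ (hτ : 0 < τ) => inv_pos.2 hτ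
  refine ⟨fun hb τ₁ τ₂ hτ₁ hlt => ?_, fun hb τ₁ τ₂ hτ₁ hlt => ?_⟩
  all_goals
    have hτ₂ : 0 < τ₂ := hτ₁.trans hlt
    rw [hdF τ₁ hτ₁, hdF τ₂ hτ₂]
    gcongr (a + ?_) / _
  · exact (strictMonoOn_sqrt_radicand_sub (mul_pos hb hk) habk).comp_strictAntiOn
      inv_strictAntiOn hinv hτ₁ hτ₂ hlt
  · exact (strictAntiOn_sqrt_radicand_sub (mul_neg_of_neg_of_pos hb hk) habk).comp
      inv_strictAntiOn hinv hτ₁ hτ₂ hlt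

/-- If a > 0, k > 0, a + bk > 0 and λ₁ > 0, then
τ ↦ d*(τ) = (1/(2λ₁τ))(aτ − 1 + √((aτ+1)² + 4bkτ)) is strictly decreasing on (0,∞)
when b > 0, and strictly increasing on (0,∞) when b < 0. -/
theorem stmt4 (a b k lam1 : ℝ) (ha : 0 < a) (hk : 0 < k) (habk : 0 < a + b * k)
    (hlam : 0 < lam1)
    (dstar : ℝ → ℝ)
    (hd : ∀ τ > (0:ℝ), dstar τ =
      (1 / (2 * lam1 * τ)) * (a * τ - 1 + Real.sqrt ((a * τ + 1) ^ 2 + 4 * b * k * τ))) :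
    (0 < b → ∀ τ₁ τ₂ : ℝ, 0 < τ₁ → τ₁ < τ₂ → dstar τ₁ > dstar τ₂) ∧
    (b < 0 → ∀ τ₁ τ₂ : ℝ, 0 < τ₁ → τ₁ < τ₂ → dstar τ₁ < dstar τ₂) :=
  stmt4_general a b k lam1 hk habk hlam dstar hd
end

section
/- Assume k > 0, a + bk > 0, and let λ₁ > 0. Then lim_{τ→0⁺} d*(τ) = (a + bk)/λ₁ and lim_{τ→+∞} d*(τ) = (a + |a|)/(2λ₁); in particular the limit at infinity equals 0 if a < 0 and equals a/λ₁ if a > 0. -/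
open Filter Topology

/-!
Write `d*(τ) = N(τ) / τ / (2λ₁)` with `N(τ) = aτ - 1 + √((aτ + 1)² + cτ)`, `c = 4bk`.
Since `N(0) = 0`, the quotient `N(τ) / τ` tends to `N'(0) = 2a + c/2` as `τ → 0⁺`.
As `τ → ∞`, substituting `x = 1/τ` gives `N(τ) / τ = a - x + √((a + x)² + cx)`, which tends to
`a + √(a²) = a + |a|` as `x → 0`.
-/

section
variable (a c : ℝ)

lemma hasDerivAt_sub_one_add_sqrt :
    HasDerivAt (fun τ : ℝ => a * τ - 1 + √((a * τ + 1) ^ 2 + c * τ)) (2 * a + c / 2) 0 := by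
  have hE : HasDerivAt (fun τ : ℝ => (a * τ + 1) ^ 2 + c * τ) (2 * a + c) 0 :=
    ((((hasDerivAt_id' 0).const_mul a).add_const 1).pow 2 |>.add
      ((hasDerivAt_id' 0).const_mul c)).congr_deriv (by ring)
  exact (((hasDerivAt_id' 0).const_mul a).sub_const 1 |>.add
    (hE.sqrt (by simp))).congr_deriv (by norm_num; ring)

lemma tendsto_sub_one_add_sqrt_div_nhdsGT_zero :
    Tendsto (fun τ : ℝ => (a * τ - 1 + √((a * τ + 1) ^ 2 + c * τ)) / τ) (𝓝[>] 0)
      (𝓝 (2 * a + c / 2)) := by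
  refine (hasDerivAt_sub_one_add_sqrt a c).tendsto_slope_zero_right.congr fun τ => ?_
  simp [div_eq_inv_mul]

lemma tendsto_sub_one_add_sqrt_div_atTop :
    Tendsto (fun τ : ℝ => (a * τ - 1 + √((a * τ + 1) ^ 2 + c * τ)) / τ) atTop
      (𝓝 (a + |a|)) := by
  have hM : Tendsto (fun x : ℝ => a - x + √((a + x) ^ 2 + c * x)) (𝓝 0) (𝓝 (a + |a|)) := by
    have : Continuous (fun x : ℝ => a - x + √((a + x) ^ 2 + c * x)) := by fun_prop
    simpa [Real.sqrt_sq_eq_abs] using this.tendsto 0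
  refine (hM.comp tendsto_inv_atTop_zero).congr' ?_
  filter_upwards [eventually_gt_atTop 0] with τ hτ
  have hsq : (a + τ⁻¹) ^ 2 + c * τ⁻¹ = ((a * τ + 1) ^ 2 + c * τ) / τ ^ 2 := by
    field_simp
  simp only [Function.comp_apply, hsq, Real.sqrt_div' _ (sq_nonneg τ), Real.sqrt_sq hτ.le]
  field_simp

end

theorem stmt5_general (a b k lam1 : ℝ)
    (dstar : ℝ → ℝ)
    (hd : ∀ τ > (0:ℝ), dstar τ =
      (1 / (2 * lam1 * τ)) * (a * τ - 1 + Real.sqrt ((a * τ + 1) ^ 2 + 4 * b * k * τ))) :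
    Tendsto dstar (𝓝[>] 0) (𝓝 ((a + b * k) / lam1)) ∧
    Tendsto dstar atTop (𝓝 ((a + |a|) / (2 * lam1))) ∧
    (a < 0 → Tendsto dstar atTop (𝓝 0)) ∧
    (0 < a → Tendsto dstar atTop (𝓝 (a / lam1))) := by
  have hd' : ∀ τ > (0:ℝ), dstar τ =
      (a * τ - 1 + √((a * τ + 1) ^ 2 + 4 * b * k * τ)) / τ / (2 * lam1) := by
    intro τ hτ
    rw [hd τ hτ]
    field_simp
  have h0 : Tendsto dstar (𝓝[>] 0) (𝓝 ((a + b * k) / lam1)) := by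
    have h := (tendsto_sub_one_add_sqrt_div_nhdsGT_zero a (4 * b * k)).div_const (2 * lam1)
    rw [show (2 * a + 4 * b * k / 2) / (2 * lam1) = (a + b * k) / lam1 by ring] at h
    exact h.congr' (eventually_nhdsWithin_of_forall fun τ hτ => (hd' τ hτ).symm)
  have hinf : Tendsto dstar atTop (𝓝 ((a + |a|) / (2 * lam1))) :=
    ((tendsto_sub_one_add_sqrt_div_atTop a (4 * b * k)).div_const (2 * lam1)).congr'
      ((eventually_gt_atTop 0).mono fun τ hτ => (hd' τ hτ).symm)
  refine ⟨h0, hinf, fun ha => ?_, fun ha => ?_⟩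
  · simpa [abs_of_neg ha] using hinf
  · convert hinf using 2
    rw [abs_of_pos ha]
    ring

/-- For k > 0, a + bk > 0 and λ₁ > 0, the function
d*(τ) = (1/(2λ₁τ))(aτ − 1 + √((aτ+1)² + 4bkτ)) satisfies
lim_{τ→0⁺} d*(τ) = (a + bk)/λ₁ and lim_{τ→+∞} d*(τ) = (a + |a|)/(2λ₁);
in particular the limit at infinity is 0 if a < 0 and a/λ₁ if a > 0. -/
theorem stmt5 (a b k lam1 : ℝ) (hk : 0 < k) (habk : 0 < a + b * k)
    (hlam : 0 < lam1)
    (dstar : ℝ → ℝ)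
    (hd : ∀ τ > (0:ℝ), dstar τ =
      (1 / (2 * lam1 * τ)) * (a * τ - 1 + Real.sqrt ((a * τ + 1) ^ 2 + 4 * b * k * τ))) :
    Tendsto dstar (𝓝[>] 0) (𝓝 ((a + b * k) / lam1)) ∧
    Tendsto dstar atTop (𝓝 ((a + |a|) / (2 * lam1))) ∧
    (a < 0 → Tendsto dstar atTop (𝓝 0)) ∧
    (0 < a → Tendsto dstar atTop (𝓝 (a / lam1))) :=
  stmt5_general a b k lam1 dstar hd
end

section
/- Suppose F : [0,∞)² → ℝ and H : [0,∞) → ℝ are continuous with H(0) = 0, and condition (A4) holds. If (u, v) is a nonnegative classical solution of the steady-state system (S) on a bounded open set Ω ⊂ ℝⁿ with zero Dirichlet boundary values, then 0 ≤ u(x) ≤ u* and 0 ≤ v(x) ≤ H* for all x ∈ Ω, where H* = max_{0 ≤ s ≤ u*} H(s). -/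
/-!
At an interior maximum of a `C²` function its Laplacian is nonpositive, since along every line
through the point the second derivative is nonpositive. If `u` exceeded `u*` somewhere, its
maximum over the compact set `closure Ω` would lie in `Ω` (as `u = 0` on `∂Ω`), and there
`d Δu = -F(u, v) ≥ -F₁(u) u > 0`. Likewise at an interior maximum of `v` above `H*`,
`d Δv = (v - H(u)) / τ > 0` because `0 ≤ u ≤ u*` forces `H(u) ≤ H*`.
-/

open Set

/-- The Laplacian of `f` at `x`: the trace of the second derivative, computed as the
sum of the pure second derivatives along the standard coordinate directions. -/
noncomputable def Lap {n : ℕ} (f : EuclideanSpace ℝ (Fin n) → ℝ)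
    (x : EuclideanSpace ℝ (Fin n)) : ℝ :=
  ∑ i : Fin n, iteratedFDeriv ℝ 2 f x ![EuclideanSpace.single i (1 : ℝ), EuclideanSpace.single i 1]

open Filter Topology InnerProductSpace Laplacian

theorem IsLocalMax.deriv_deriv_nonpos {g : ℝ → ℝ} {x₀ : ℝ} (h : IsLocalMax g x₀)
    (hc : ContinuousAt g x₀) : deriv (deriv g) x₀ ≤ 0 := by
  by_contra! hpos
  -- the second derivative test makes `x₀` a local minimum too, so `g` is locally constant
  have hconst : g =ᶠ[𝓝 x₀] fun _ => g x₀ :=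
    ((isLocalMin_of_deriv_deriv_pos hpos h.deriv_eq_zero hc).and h).mono
      fun _ hx => le_antisymm hx.2 hx.1
  simp [hconst.deriv.deriv_eq] at hpos

theorem IsLocalMax.iteratedFDeriv_two_apply_self_nonpos {E : Type*} [NormedAddCommGroup E]
    [NormedSpace ℝ E] {f : E → ℝ} {x₀ : E} (h : IsLocalMax f x₀) (hf : ContDiffAt ℝ 2 f x₀)
    (e : E) : iteratedFDeriv ℝ 2 f x₀ ![e, e] ≤ 0 := by
  have hline : ∀ t : ℝ, HasDerivAt (fun t : ℝ => x₀ + t • e) e t := fun t => by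
    simpa using ((hasDerivAt_id t).smul_const e).const_add x₀
  have hnear : ∀ᶠ t in 𝓝 (0 : ℝ), DifferentiableAt ℝ f (x₀ + t • e) := by
    have hto : Tendsto (fun t : ℝ => x₀ + t • e) (𝓝 0) (𝓝 x₀) :=
      Continuous.tendsto' (by fun_prop) 0 x₀ (by simp)
    exact hto.eventually ((hf.eventually (by simp)).mono
      fun _ hy => hy.differentiableAt two_ne_zero)
  have hderiv : deriv (fun t : ℝ => f (x₀ + t • e)) =ᶠ[𝓝 0]
      fun t => fderiv ℝ f (x₀ + t • e) e :=
    hnear.mono fun t ht => (ht.hasFDerivAt.comp_hasDerivAt t (hline t)).deriv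
  have hsecond : HasDerivAt (fun t : ℝ => fderiv ℝ f (x₀ + t • e) e)
      (fderiv ℝ (fderiv ℝ f) x₀ e e) 0 := by
    have hD : DifferentiableAt ℝ (fderiv ℝ f) x₀ :=
      (hf.fderiv_right (m := 1) le_rfl).differentiableAt one_ne_zero
    exact (hD.hasFDerivAt.comp_hasDerivAt_of_eq 0 (hline 0) (by simp)).clm_apply
      (hasDerivAt_const 0 e) |>.congr_deriv (by simp)
  have hmax : IsLocalMax (fun t : ℝ => f (x₀ + t • e)) 0 :=
    IsLocalMax.comp_continuous (by simpa using h) (hline 0).continuousAt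
  rw [iteratedFDeriv_two_apply]
  simpa [hderiv.deriv_eq, hsecond.deriv] using
    hmax.deriv_deriv_nonpos (hf.continuousAt.comp_of_eq (hline 0).continuousAt (by simp))

section Laplacian

variable {E : Type*} [NormedAddCommGroup E] [InnerProductSpace ℝ E] [FiniteDimensional ℝ E]

theorem IsLocalMax.laplacian_nonpos {f : E → ℝ} {x₀ : E} (h : IsLocalMax f x₀)
    (hf : ContDiffAt ℝ 2 f x₀) : Δ f x₀ ≤ 0 := by
  rw [laplacian_eq_iteratedFDeriv_stdOrthonormalBasis]
  exact Finset.sum_nonpos fun i _ => h.iteratedFDeriv_two_apply_self_nonpos hf _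

theorem le_of_frontier_le_of_laplacian_pos {Ω : Set E} (hΩo : IsOpen Ω)
    (hΩb : Bornology.IsBounded Ω) {w : E → ℝ} {M : ℝ} (hwc : ContinuousOn w (closure Ω))
    (hw2 : ContDiffOn ℝ 2 w Ω) (hwb : ∀ x ∈ frontier Ω, w x ≤ M)
    (hΔ : ∀ x ∈ Ω, M < w x → 0 < Δ w x) : ∀ x ∈ Ω, w x ≤ M := by
  intro x hx
  by_contra! hlt
  obtain ⟨x₀, hx₀, hmax⟩ := hΩb.isCompact_closure.exists_isMaxOn ⟨x, subset_closure hx⟩ hwc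
  have hbig : M < w x₀ := hlt.trans_le (hmax (subset_closure hx))
  have hx₀Ω : x₀ ∈ Ω := by
    rw [← hΩo.interior_eq, ← closure_sdiff_frontier]
    exact ⟨hx₀, fun hfr => (hwb x₀ hfr).not_gt hbig⟩
  have hloc : IsLocalMax w x₀ :=
    mem_of_superset (hΩo.mem_nhds hx₀Ω) fun y hy => hmax (subset_closure hy)
  exact (hloc.laplacian_nonpos (hw2.contDiffAt (hΩo.mem_nhds hx₀Ω))).not_gt (hΔ x₀ hx₀Ω hbig)

end Laplacian

theorem Lap_eq_laplacian {n : ℕ} (f : EuclideanSpace ℝ (Fin n) → ℝ) : Lap f = Δ f := by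
  rw [laplacian_eq_iteratedFDeriv_orthonormalBasis f (EuclideanSpace.basisFun (Fin n) ℝ)]
  ext x
  simp [Lap, EuclideanSpace.basisFun_apply]

theorem stmt6_general {n : ℕ} (Ω : Set (EuclideanSpace ℝ (Fin n)))
    (hΩo : IsOpen Ω) (hΩb : Bornology.IsBounded Ω)
    (d τ : ℝ) (hd : 0 < d) (hτ : 0 < τ)
    (F : ℝ → ℝ → ℝ) (H : ℝ → ℝ)
    (hH0 : H 0 = 0)
    -- condition (A4)
    (F₁ : ℝ → ℝ) (ustar : ℝ) (hustar : 0 < ustar)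
    (hFle : ∀ u ≥ (0:ℝ), ∀ v ≥ (0:ℝ), F u v ≤ F₁ u * u)
    (hF₁neg : ∀ u : ℝ, ustar < u → F₁ u < 0)
    -- (u, v) nonnegative classical solution of (S)
    (u v : EuclideanSpace ℝ (Fin n) → ℝ)
    (huc : ContinuousOn u (closure Ω)) (hvc : ContinuousOn v (closure Ω))
    (hu2 : ContDiffOn ℝ 2 u Ω) (hv2 : ContDiffOn ℝ 2 v Ω)
    (hub : ∀ x ∈ frontier Ω, u x = 0) (hvb : ∀ x ∈ frontier Ω, v x = 0)
    (hun : ∀ x ∈ Ω, 0 ≤ u x) (hvn : ∀ x ∈ Ω, 0 ≤ v x)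
    (heq1 : ∀ x ∈ Ω, d * Lap u x + F (u x) (v x) = 0)
    (heq2 : ∀ x ∈ Ω, d * Lap v x + (1 / τ) * (H (u x) - v x) = 0)
    -- H* = max of H on [0, u*]
    (Hstar : ℝ) (hHstar : IsGreatest (H '' Icc 0 ustar) Hstar) :
    ∀ x ∈ Ω, 0 ≤ u x ∧ u x ≤ ustar ∧ 0 ≤ v x ∧ v x ≤ Hstar := by
  have hu_le : ∀ x ∈ Ω, u x ≤ ustar :=
    le_of_frontier_le_of_laplacian_pos hΩo hΩb huc hu2 (fun x hx => (hub x hx).trans_le hustar.le)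
      fun x hx hbig => by
        have hF : F (u x) (v x) < 0 := (hFle _ (hun x hx) _ (hvn x hx)).trans_lt
          (mul_neg_of_neg_of_pos (hF₁neg _ hbig) (hustar.trans hbig))
        rw [← Lap_eq_laplacian]
        exact pos_of_mul_pos_right (by linarith [heq1 x hx]) hd.le
  have hHstar_nonneg : 0 ≤ Hstar := hH0 ▸ hHstar.2 ⟨0, ⟨le_rfl, hustar.le⟩, rfl⟩
  have hv_le : ∀ x ∈ Ω, v x ≤ Hstar :=
    le_of_frontier_le_of_laplacian_pos hΩo hΩb hvc hv2
      (fun x hx => (hvb x hx).trans_le hHstar_nonneg) fun x hx hbig => by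
        have hH : H (u x) ≤ Hstar := hHstar.2 ⟨u x, ⟨hun x hx, hu_le x hx⟩, rfl⟩
        have hsrc : (1 / τ) * (H (u x) - v x) < 0 :=
          mul_neg_of_pos_of_neg (by positivity) (by linarith)
        rw [← Lap_eq_laplacian]
        exact pos_of_mul_pos_right (by linarith [heq2 x hx]) hd.le
  exact fun x hx => ⟨hun x hx, hu_le x hx, hvn x hx, hv_le x hx⟩

/-- a priori bounds for nonnegative classical solutions of the steady
state system (S) under condition (A4): 0 ≤ u ≤ u* and 0 ≤ v ≤ H* = max_{[0,u*]} H. -/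
theorem stmt6 {n : ℕ} (Ω : Set (EuclideanSpace ℝ (Fin n)))
    (hΩo : IsOpen Ω) (hΩb : Bornology.IsBounded Ω)
    (d τ : ℝ) (hd : 0 < d) (hτ : 0 < τ)
    (F : ℝ → ℝ → ℝ) (H : ℝ → ℝ)
    (hFc : ContinuousOn (Function.uncurry F) (Ici 0 ×ˢ Ici 0))
    (hHc : ContinuousOn H (Ici 0)) (hH0 : H 0 = 0)
    -- condition (A4)
    (F₁ : ℝ → ℝ) (K₀ ustar : ℝ) (hK₀ : 0 < K₀) (hustar : 0 < ustar)
    (hF₁c : ContinuousOn F₁ (Ici 0))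
    (hFle : ∀ u ≥ (0:ℝ), ∀ v ≥ (0:ℝ), F u v ≤ F₁ u * u)
    (hF₁star : F₁ ustar = 0)
    (hF₁pos : ∀ u : ℝ, 0 < u → u < ustar → 0 < F₁ u ∧ F₁ u < K₀)
    (hF₁neg : ∀ u : ℝ, ustar < u → F₁ u < 0)
    -- (u, v) nonnegative classical solution of (S)
    (u v : EuclideanSpace ℝ (Fin n) → ℝ)
    (huc : ContinuousOn u (closure Ω)) (hvc : ContinuousOn v (closure Ω))
    (hu2 : ContDiffOn ℝ 2 u Ω) (hv2 : ContDiffOn ℝ 2 v Ω)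
    (hub : ∀ x ∈ frontier Ω, u x = 0) (hvb : ∀ x ∈ frontier Ω, v x = 0)
    (hun : ∀ x ∈ Ω, 0 ≤ u x) (hvn : ∀ x ∈ Ω, 0 ≤ v x)
    (heq1 : ∀ x ∈ Ω, d * Lap u x + F (u x) (v x) = 0)
    (heq2 : ∀ x ∈ Ω, d * Lap v x + (1 / τ) * (H (u x) - v x) = 0)
    -- H* = max of H on [0, u*]
    (Hstar : ℝ) (hHstar : IsGreatest (H '' Icc 0 ustar) Hstar) :
    ∀ x ∈ Ω, 0 ≤ u x ∧ u x ≤ ustar ∧ 0 ≤ v x ∧ v x ≤ Hstar :=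
  stmt6_general Ω hΩo hΩb d τ hd hτ F H hH0 F₁ ustar hustar hFle hF₁neg u v huc hvc hu2 hv2 hub hvb
    hun hvn heq1 heq2 Hstar hHstar
end

section
/- Let L, d, τ > 0. Assume f : [0,∞)² → ℝ is continuously differentiable with ∂f/∂u < 0 and ∂f/∂v < 0 everywhere on [0,∞)², and H : [0,∞) → ℝ is continuous. If the one-dimensional steady-state system (52) has a positive classical solution, then d < f(0,0)·L²/π². Equivalently, (52) has no positive classical solution when d ≥ d* := f(0,0)·L²/π². -/
/-!
Test the equation for `u` against the first Dirichlet eigenfunction `φ x = sin (π x / L)`.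
Integrating by parts twice (the Wronskian `u' φ - u φ'` vanishes at both ends) gives
`∫ u'' φ = -λ₁ ∫ u φ` with `λ₁ = (π / L)²`, so
`(f(0,0) - d λ₁) ∫ u φ = ∫ (f(0,0) - f(u,v)) u φ`.
Since `f` is strictly decreasing in each variable on `[0,∞)²` and `u, v > 0` inside,
the right side is positive, as is `∫ u φ`; hence `d λ₁ < f(0,0)`.
-/

open Set Real
open MeasureTheory (volume)
open intervalIntegral

section SecondDerivative

variable {u : ℝ → ℝ} {a b : ℝ}

theorem ContDiffOn.hasDerivAt_derivWithin_Icc (hu : ContDiffOn ℝ 2 u (Icc a b)) {x : ℝ}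
    (hx : x ∈ Ioo a b) : HasDerivAt (derivWithin u (Icc a b)) (deriv (deriv u) x) x := by
  have hIcc : Icc a b ∈ nhds x := Icc_mem_nhds hx.1 hx.2
  have hdiff : DifferentiableOn ℝ (derivWithin u (Icc a b)) (Icc a b) :=
    (hu.derivWithin (uniqueDiffOn_Icc (hx.1.trans hx.2)) (m := 1) (by norm_num)).differentiableOn
      one_ne_zero
  have heq : derivWithin u (Icc a b) =ᶠ[nhds x] deriv u := by
    filter_upwards [isOpen_Ioo.mem_nhds hx] with y hy
    exact derivWithin_of_mem_nhds (Icc_mem_nhds hy.1 hy.2)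
  rw [← heq.deriv_eq]
  exact ((hdiff x (Ioo_subset_Icc_self hx)).differentiableAt hIcc).hasDerivAt

theorem ContDiffOn.intervalIntegrable_deriv_deriv (hab : a < b)
    (hu : ContDiffOn ℝ 2 u (Icc a b)) : IntervalIntegrable (deriv (deriv u)) volume a b := by
  have hs := uniqueDiffOn_Icc hab
  have hcont : ContinuousOn (derivWithin (derivWithin u (Icc a b)) (Icc a b)) (Icc a b) :=
    (hu.derivWithin hs (m := 1) (by norm_num)).continuousOn_derivWithin hs le_rfl
  rw [intervalIntegrable_iff_integrableOn_Ioo_of_le hab.le]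
  refine (hcont.integrableOn_Icc.mono_set Ioo_subset_Icc_self).congr_fun
    (fun x hx => ?_) measurableSet_Ioo
  exact ((hu.hasDerivAt_derivWithin_Icc hx).hasDerivWithinAt.derivWithin
    (hs x (Ioo_subset_Icc_self hx)))

theorem integral_deriv_deriv_mul_eq_integral_mul (hab : a < b) (hu : ContDiffOn ℝ 2 u (Icc a b))
    (hua : u a = 0) (hub : u b = 0) {φ φ' φ'' : ℝ → ℝ} (hφ : ∀ x, HasDerivAt φ (φ' x) x)
    (hφ' : ∀ x, HasDerivAt φ' (φ'' x) x) (hφ'' : Continuous φ'') (hφa : φ a = 0)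
    (hφb : φ b = 0) :
    ∫ x in a..b, deriv (deriv u) x * φ x = ∫ x in a..b, u x * φ'' x := by
  set u' := derivWithin u (Icc a b)
  have hφc : Continuous φ := continuous_iff_continuousAt.2 fun x => (hφ x).continuousAt
  have hφ'c : Continuous φ' := continuous_iff_continuousAt.2 fun x => (hφ' x).continuousAt
  have hu'c : ContinuousOn u' (Icc a b) :=
    hu.continuousOn_derivWithin (uniqueDiffOn_Icc hab) one_le_two
  have hint₁ : IntervalIntegrable (fun x => deriv (deriv u) x * φ x) volume a b :=
    (hu.intervalIntegrable_deriv_deriv hab).mul_continuousOn hφc.continuousOn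
  have hint₂ : IntervalIntegrable (fun x => u x * φ'' x) volume a b :=
    (hu.continuousOn.mul hφ''.continuousOn).intervalIntegrable_of_Icc hab.le
  have hW : ∀ x ∈ Ioo a b, HasDerivAt (fun y => u' y * φ y - u y * φ' y)
      (deriv (deriv u) x * φ x - u x * φ'' x) x := by
    intro x hx
    have hux : HasDerivAt u (u' x) x :=
      ((hu.differentiableOn two_ne_zero x (Ioo_subset_Icc_self hx)).hasDerivWithinAt).hasDerivAt
        (Icc_mem_nhds hx.1 hx.2)
    exact (((hu.hasDerivAt_derivWithin_Icc hx).mul (hφ x)).sub (hux.mul (hφ' x))).congr_deriv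
      (by ring)
  rw [← sub_eq_zero, ← integral_sub hint₁ hint₂,
    integral_eq_sub_of_hasDerivAt_of_le hab.le
      ((hu'c.mul hφc.continuousOn).sub (hu.continuousOn.mul hφ'c.continuousOn)) hW
      (hint₁.sub hint₂)]
  simp [hua, hub, hφa, hφb]

end SecondDerivative

theorem integral_deriv_deriv_mul_sin {u : ℝ → ℝ} {L : ℝ} (hL : 0 < L)
    (hu : ContDiffOn ℝ 2 u (Icc 0 L)) (hu0 : u 0 = 0) (huL : u L = 0) :
    ∫ x in (0)..L, deriv (deriv u) x * sin (π / L * x) =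
      -(π / L) ^ 2 * ∫ x in (0)..L, u x * sin (π / L * x) := by
  have hlin (x : ℝ) : HasDerivAt (fun y => π / L * y) (π / L) x := by
    simpa using (hasDerivAt_id x).const_mul (π / L)
  rw [← integral_const_mul]
  refine (integral_deriv_deriv_mul_eq_integral_mul hL hu hu0 huL
    (φ' := fun x => π / L * cos (π / L * x)) (φ'' := fun x => -(π / L) ^ 2 * sin (π / L * x))
    (fun x => ?_) (fun x => ?_) (by fun_prop) (by simp) (by simp [div_mul_cancel₀ _ hL.ne'])).trans
    (integral_congr fun x _ => by ring)
  · exact ((hlin x).sin).congr_deriv (by ring)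
  · exact (((hlin x).cos).const_mul (π / L)).congr_deriv (by ring)

theorem sin_pi_div_mul_pos {L x : ℝ} (hx : x ∈ Ioo 0 L) : 0 < sin (π / L * x) := by
  have hL : 0 < L := hx.1.trans hx.2
  apply sin_pos_of_pos_of_lt_pi (by have := hx.1; positivity)
  rw [div_mul_eq_mul_div, div_lt_iff₀ hL]
  exact mul_lt_mul_of_pos_left hx.2 pi_pos

theorem strictAntiOn_Ici_zero_of_deriv_neg {g : ℝ → ℝ} (hg : Continuous g)
    (hg' : ∀ x > 0, deriv g x < 0) : StrictAntiOn g (Ici 0) :=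
  strictAntiOn_of_deriv_neg (convex_Ici 0) hg.continuousOn
    fun x hx => hg' x (by rwa [interior_Ici] at hx)

theorem lt_apply_zero_zero_of_deriv_neg {f : ℝ → ℝ → ℝ} (hf : Continuous (Function.uncurry f))
    (hfu : ∀ p ≥ (0:ℝ), ∀ q ≥ (0:ℝ), deriv (fun s => f s q) p < 0)
    (hfv : ∀ p ≥ (0:ℝ), ∀ q ≥ (0:ℝ), deriv (f p) q < 0) {p q : ℝ} (hp : 0 < p) (hq : 0 < q) :
    f p q < f 0 0 := calc
  f p q < f 0 q :=
    strictAntiOn_Ici_zero_of_deriv_neg (hf.comp (continuous_id.prodMk continuous_const))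
      (fun x hx => hfu x hx.le q hq.le) self_mem_Ici hp.le hp
  _ < f 0 0 :=
    strictAntiOn_Ici_zero_of_deriv_neg (hf.comp (continuous_const.prodMk continuous_id))
      (fun x hx => hfv 0 le_rfl x hx.le) self_mem_Ici hq.le hq

theorem stmt13_general (L d : ℝ) (hL : 0 < L)
    (f : ℝ → ℝ → ℝ)
    (hf : ContDiff ℝ 1 (Function.uncurry f))
    (hfu : ∀ p ≥ (0:ℝ), ∀ q ≥ (0:ℝ), deriv (fun s => f s q) p < 0)
    (hfv : ∀ p ≥ (0:ℝ), ∀ q ≥ (0:ℝ), deriv (f p) q < 0)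
    -- (u, v) positive classical solution of (52)
    (u v : ℝ → ℝ)
    (hu2 : ContDiffOn ℝ 2 u (Icc 0 L))
    (hup : ∀ x ∈ Ioo 0 L, 0 < u x) (hvp : ∀ x ∈ Ioo 0 L, 0 < v x)
    (heq1 : ∀ x ∈ Ioo 0 L, -(d * deriv (deriv u) x) = u x * f (u x) (v x))
    (hub : u 0 = 0 ∧ u L = 0) :
    d < f 0 0 * L ^ 2 / π ^ 2 := by
  have hφ : Continuous fun x => sin (π / L * x) := by fun_prop
  have huφ : IntervalIntegrable (fun x => u x * sin (π / L * x)) volume 0 L :=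
    (hu2.continuousOn.mul hφ.continuousOn).intervalIntegrable_of_Icc hL.le
  have hu''φ : IntervalIntegrable (fun x => deriv (deriv u) x * sin (π / L * x)) volume 0 L :=
    (hu2.intervalIntegrable_deriv_deriv hL).mul_continuousOn hφ.continuousOn
  have hI : 0 < ∫ x in (0)..L, u x * sin (π / L * x) :=
    intervalIntegral_pos_of_pos_on huφ (fun x hx => mul_pos (hup x hx) (sin_pi_div_mul_pos hx)) hL
  -- on `(0, L)` the equation for `u` turns this integrand into `(f 0 0 - f u v) u φ > 0`
  have hK : 0 < ∫ x in (0)..L,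
      (f 0 0 * (u x * sin (π / L * x)) + d * (deriv (deriv u) x * sin (π / L * x))) := by
    refine intervalIntegral_pos_of_pos_on ((huφ.const_mul _).add (hu''φ.const_mul _))
      (fun x hx => ?_) hL
    have hf0 := lt_apply_zero_zero_of_deriv_neg hf.continuous hfu hfv (hup x hx) (hvp x hx)
    have := mul_pos (sub_pos.2 hf0) (mul_pos (hup x hx) (sin_pi_div_mul_pos hx))
    linear_combination this + sin (π / L * x) * heq1 x hx
  rw [integral_add (huφ.const_mul _) (hu''φ.const_mul _), integral_const_mul, integral_const_mul,
    integral_deriv_deriv_mul_sin hL hu2 hub.1 hub.2] at hK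
  have hcrit : d * (π / L) ^ 2 < f 0 0 := lt_of_mul_lt_mul_right (by linarith) hI.le
  rw [lt_div_iff₀ (by positivity)]
  calc d * π ^ 2 = d * (π / L) ^ 2 * L ^ 2 := by field_simp
    _ < f 0 0 * L ^ 2 := by gcongr

/-- nonexistence of positive solutions of the 1D steady state system (52)
for large diffusion. If f is C¹ with f_u < 0 and f_v < 0 on [0,∞)², H is continuous,
and (52) has a positive classical solution, then d < f(0,0)·L²/π². -/
theorem stmt13 (L d τ : ℝ) (hL : 0 < L) (hd : 0 < d) (hτ : 0 < τ)
    (f : ℝ → ℝ → ℝ) (H : ℝ → ℝ)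
    (hf : ContDiff ℝ 1 (Function.uncurry f))
    (hfu : ∀ p ≥ (0:ℝ), ∀ q ≥ (0:ℝ), deriv (fun s => f s q) p < 0)
    (hfv : ∀ p ≥ (0:ℝ), ∀ q ≥ (0:ℝ), deriv (f p) q < 0)
    (hH : Continuous H)
    -- (u, v) positive classical solution of (52)
    (u v : ℝ → ℝ)
    (hu2 : ContDiffOn ℝ 2 u (Icc 0 L)) (hv2 : ContDiffOn ℝ 2 v (Icc 0 L))
    (hup : ∀ x ∈ Ioo 0 L, 0 < u x) (hvp : ∀ x ∈ Ioo 0 L, 0 < v x)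
    (heq1 : ∀ x ∈ Ioo 0 L, -(d * deriv (deriv u) x) = u x * f (u x) (v x))
    (heq2 : ∀ x ∈ Ioo 0 L, -(d * deriv (deriv v) x) = (1 / τ) * (H (u x) - v x))
    (hub : u 0 = 0 ∧ u L = 0) (hvb : v 0 = 0 ∧ v L = 0) :
    d < f 0 0 * L ^ 2 / π ^ 2 :=
  stmt13_general L d hL f hf hfu hfv u v hu2 hup hvp heq1 hub
end
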